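/- For every natural number n, the minimal number of R-steps needed to reach, from the history h_n = (Off, rⁿ), some history of length n whose last location is On is exactly 2n+1: there is a chain h_n = g₀ R g₁ R … R g_{2n+1} with last g_{2n+1} = On, and every chain from h_n to a history with last location On has length at least 2n+1. -/

import Mathlib

/-- Transition function: reset (`false`) always yields Off (`false`),
    toggle (`true`) flips the location. -/
def step (l a : Bool) : Bool := if a then !l else false

/-- A history: an initial location together with a list of actions. -/
abbrev Hist := Bool × List Bool

/-- The sequence of locations visited along a history (length = #actions + 1). -/
def locSeq (h : Hist) : List Bool := List.scanl step h.1 h.2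

/-- The last location of a history (the final entry of `locSeq`). -/
def lastLoc (h : Hist) : Bool := List.foldl step h.1 h.2

/-- Appending an action to a history. -/
def ext (h : Hist) (a : Bool) : Hist := (h.1, h.2 ++ [a])

/-- Human indistinguishability: equal action lists. -/
def humanInd (h₁ h₂ : Hist) : Prop := h₁.2 = h₂.2

/-- AI indistinguishability: equal location sequences. -/
def aiInd (h₁ h₂ : Hist) : Prop := locSeq h₁ = locSeq h₂

/-- The union of the two indistinguishability relations. -/
def GRel (h₁ h₂ : Hist) : Prop := humanInd h₁ h₂ ∨ aiInd h₁ h₂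

/-- The history `(Off, rⁿ)`: initial location Off, then `n` reset actions. -/
def hn (n : ℕ) : Hist := (false, List.replicate n false)

/-- `reachLe k h g`: `g` is reachable from `h` by at most `k` steps of `GRel`. -/
def reachLe : ℕ → Hist → Hist → Prop
  | 0, h, g => h = g
  | k+1, h, g => reachLe k h g ∨ ∃ h', GRel h h' ∧ reachLe k h' g

/-!
Upper bound: alternate Human steps, which choose the initial location so that the location after the
`k` leading toggles is On, with AI steps, which may then turn the next reset into a toggle since
both actions lead to Off. After `n` rounds a last Human step switches the final location On.

Lower bound, by induction on `n`: deleting the last action maps chains to chains. Along a chain from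
`(Off, rⁿ⁺¹)`, the step where the last location first becomes On is a Human step from a history
ending in a toggle, and the step where the last action first becomes a toggle is an AI step from a
history whose truncation already ends On. Reaching the latter costs `2n + 1` steps by induction,
and the two transitions cost two more.
-/

def dropLastAction (h : Hist) : Hist := (h.1, h.2.dropLast)

section Histories

variable {h h' : Hist} {a a' : Bool}

lemma lastLoc_ext (h : Hist) (a : Bool) : lastLoc (ext h a) = step (lastLoc h) a :=
  List.foldl_concat _ _ _ _

lemma locSeq_ext (h : Hist) (a : Bool) :
    locSeq (ext h a) = locSeq h ++ [step (lastLoc h) a] := by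
  simp [locSeq, ext, lastLoc, List.scanl_append]

lemma lastLoc_eq_of_aiInd (hai : aiInd h h') : lastLoc h = lastLoc h' := by
  simpa [locSeq, lastLoc, List.getLast?_scanl] using congrArg List.getLast? hai

lemma length_eq_of_gRel (hg : GRel h h') : h.2.length = h'.2.length := by
  rcases hg with hhum | hai
  · exact congrArg List.length hhum
  · simpa [locSeq, List.length_scanl] using congrArg List.length hai

lemma humanInd_ext_iff : humanInd (ext h a) (ext h' a') ↔ humanInd h h' ∧ a = a' := by
  refine ⟨fun hhum => ?_, fun ⟨hhum, ha⟩ => by rw [humanInd, ext, ext, hhum, ha]⟩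
  obtain ⟨hacts, hlast⟩ := List.append_inj' hhum rfl
  exact ⟨hacts, List.singleton_inj.mp hlast⟩

lemma aiInd_ext_iff :
    aiInd (ext h a) (ext h' a') ↔ aiInd h h' ∧ step (lastLoc h) a = step (lastLoc h') a' := by
  refine ⟨fun hai => ?_, fun ⟨hai, hstep⟩ => by rw [aiInd, locSeq_ext, locSeq_ext, hai, hstep]⟩
  rw [aiInd, locSeq_ext, locSeq_ext] at hai
  obtain ⟨hseq, hlast⟩ := List.append_inj' hai rfl
  exact ⟨hseq, List.singleton_inj.mp hlast⟩

lemma gRel_of_gRel_ext (hg : GRel (ext h a) (ext h' a')) : GRel h h' :=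
  hg.imp (fun hhum => (humanInd_ext_iff.mp hhum).1) (fun hai => (aiInd_ext_iff.mp hai).1)

lemma ext_dropLastAction (hne : h.2 ≠ []) : ext (dropLastAction h) (h.2.getLastD false) = h := by
  simp [ext, dropLastAction, List.getLastD_eq_getLast?, List.getLast?_eq_some_getLast hne,
    List.dropLast_concat_getLast hne]

/-- AI steps preserve the last location, and a final reset forces it Off. -/
lemma eq_true_of_gRel_ext_of_lastLoc_ne (hg : GRel (ext h a) (ext h' a'))
    (hne : lastLoc (ext h a) ≠ lastLoc (ext h' a')) : a = true := by
  rcases hg with hhum | hai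
  · obtain ⟨-, rfl⟩ := humanInd_ext_iff.mp hhum
    cases a
    · simp [lastLoc_ext, step] at hne
    · rfl
  · exact absurd (lastLoc_eq_of_aiInd hai) hne

/-- Only an AI step can change the last action, and it then forces `step l true = false`. -/
lemma lastLoc_eq_true_of_gRel_ext_false_true (hg : GRel (ext h false) (ext h' true)) :
    lastLoc h = true := by
  rcases hg with hhum | hai
  · exact absurd (humanInd_ext_iff.mp hhum).2 Bool.false_ne_true
  · obtain ⟨hai, hstep⟩ := aiInd_ext_iff.mp hai
    rw [lastLoc_eq_of_aiInd hai]
    simpa [step] using hstep.symm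

lemma aiInd_append_false_cons_true_cons (rs : List Bool) (hlast : lastLoc h = true) :
    aiInd (h.1, h.2 ++ false :: rs) (h.1, h.2 ++ true :: rs) := by
  simp only [aiInd, locSeq, List.scanl_append]
  rw [show List.foldl step h.1 h.2 = true from hlast]
  rfl

lemma lastLoc_replicate_true (l : Bool) (k : ℕ) :
    lastLoc (l, List.replicate k true) = (l ^^ decide (Odd k)) := by
  induction k generalizing l with
  | zero => simp [lastLoc]
  | succ k ih =>
    simp only [lastLoc, List.replicate_succ, List.foldl_cons] at ih ⊢
    rw [ih]
    rcases Nat.even_or_odd k with hk | hk <;> cases l <;> simp [step, hk, Nat.odd_add_one]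

end Histories

lemma exists_lt_not_and_succ {P : ℕ → Prop} {m : ℕ} (h0 : ¬P 0) (hm : P m) :
    ∃ i < m, ¬P i ∧ P (i + 1) := by
  induction m with
  | zero => exact absurd hm h0
  | succ m ih =>
    by_cases hPm : P m
    · obtain ⟨i, him, hi⟩ := ih hPm
      exact ⟨i, by omega, hi⟩
    · exact ⟨m, by omega, hPm, hm⟩

/-- Stages `2k+1` and `2k+2` both carry the initial location making the location after `k` toggles
On; they have `k` and `k+1` leading toggles respectively. -/
def climb (n i : ℕ) : Hist :=
  (decide (Odd ((i + 1) / 2)), List.replicate (i / 2) true ++ List.replicate (n - i / 2) false)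

lemma gRel_climb_succ {n i : ℕ} (hi : i < 2 * n + 1) : GRel (climb n i) (climb n (i + 1)) := by
  obtain ⟨k, rfl | rfl⟩ := Nat.even_or_odd' i
  · left
    simp only [humanInd, climb]
    rw [show 2 * k / 2 = (2 * k + 1) / 2 by omega]
  · right
    obtain ⟨r, hr⟩ : ∃ r, n - k = r + 1 := ⟨n - k - 1, by omega⟩
    have hlast : lastLoc (decide (Odd (k + 1)), List.replicate k true) = true := by
      rw [lastLoc_replicate_true]
      by_cases hk : Odd k <;> simp [hk, Nat.odd_add_one]
    have hai := aiInd_append_false_cons_true_cons (List.replicate r false) hlast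
    simp only [climb]
    rw [show (2 * k + 1 + 1) / 2 = k + 1 by omega, show (2 * k + 1 + 1 + 1) / 2 = k + 1 by omega,
      show (2 * k + 1) / 2 = k by omega, hr, show n - (k + 1) = r by omega,
      List.replicate_succ' (n := k), List.append_assoc]
    exact hai

lemma lastLoc_climb (n : ℕ) : lastLoc (climb n (2 * n + 1)) = true := by
  simp only [climb]
  rw [show (2 * n + 1 + 1) / 2 = n + 1 by omega, show (2 * n + 1) / 2 = n by omega, Nat.sub_self,
    List.replicate_zero, List.append_nil, lastLoc_replicate_true]
  by_cases hn : Odd n <;> simp [hn, Nat.odd_add_one]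

theorem two_mul_add_one_le_of_chain (n m : ℕ) (g : ℕ → Hist) (h0 : g 0 = hn n)
    (hg : ∀ i < m, GRel (g i) (g (i + 1))) (hm : lastLoc (g m) = true) : 2 * n + 1 ≤ m := by
  induction n generalizing m g with
  | zero =>
    rcases Nat.eq_zero_or_pos m with rfl | hpos
    · simp [h0, hn, lastLoc] at hm
    · omega
  | succ n ih =>
    have hlen : ∀ i ≤ m, (g i).2.length = n + 1 := by
      intro i hi
      induction i with
      | zero => simp [h0, hn]
      | succ i ihi => rw [← length_eq_of_gRel (hg i (by omega)), ihi (by omega)]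
    set t := fun i => dropLastAction (g i)
    set a := fun i => (g i).2.getLastD false
    have hext : ∀ i ≤ m, ext (t i) (a i) = g i := fun i hi =>
      ext_dropLastAction (List.ne_nil_of_length_eq_add_one (hlen i hi))
    have hstep : ∀ i < m, GRel (ext (t i) (a i)) (ext (t (i + 1)) (a (i + 1))) := fun i hi => by
      rw [hext i hi.le, hext (i + 1) hi]
      exact hg i hi
    obtain ⟨i, him, hi_off, hi_on⟩ := exists_lt_not_and_succ (P := fun k => lastLoc (g k) = true)
      (by simp [h0, hn, lastLoc, List.replicate_succ', step]) hm
    have hai : a i = true := eq_true_of_gRel_ext_of_lastLoc_ne (hstep i him)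
      (by rw [hext i him.le, hext (i + 1) him]; simp_all)
    obtain ⟨j, hji, hj_reset, hj_toggle⟩ := exists_lt_not_and_succ (P := fun k => a k = true)
      (by simp [a, h0, hn, List.replicate_succ']) hai
    have hj : lastLoc (t j) = true := by
      simp only [Bool.not_eq_true] at hj_reset
      have := hstep j (by omega)
      rw [hj_reset, hj_toggle] at this
      exact lastLoc_eq_true_of_gRel_ext_false_true this
    have ht0 : t 0 = hn n := by simp [t, dropLastAction, h0, hn, List.replicate_succ']
    have := ih j t ht0 (fun k hk => gRel_of_gRel_ext (hstep k (by omega))) hj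
    omega

/-- the minimal number of `GRel`-steps from `hn n` to a history
    with last location On is exactly `2n+1`. -/
theorem stmt2 (n : ℕ) :
    (∃ g : ℕ → Hist, g 0 = hn n ∧
      (∀ i < 2 * n + 1, GRel (g i) (g (i + 1))) ∧
      lastLoc (g (2 * n + 1)) = true) ∧
    (∀ (m : ℕ) (g : ℕ → Hist), g 0 = hn n →
      (∀ i < m, GRel (g i) (g (i + 1))) →
      lastLoc (g m) = true → 2 * n + 1 ≤ m) := by
  refine ⟨⟨climb n, ?_, fun i hi => gRel_climb_succ hi, lastLoc_climb n⟩,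
    two_mul_add_one_le_of_chain n⟩
  simp [climb, hn]
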